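/- arXiv:1901.03421 — 2 statements merged into one kernel-verified Lean document; each statement's English description precedes it below -/
import Mathlib

section
/- Two gauges γ₁ and γ₂ on a finite-dimensional vector space X are isometric (there is a map T : X → X with γ₂(Tz − Tx) = γ₁(z − x) for all x,z) if and only if their unit balls K₁ and K₂ are linearly equivalent, i.e., there exists a linear isomorphism T of X with T(K₁) = K₂. -/
/-- A gauge: positive, nondegenerate, positively homogeneous, subadditive. -/
def IsGauge {X : Type*} [AddCommGroup X] [Module ℝ X] (γ : X → ℝ) : Prop :=
  (∀ x : X, 0 ≤ γ x ∧ (γ x = 0 ↔ x = 0)) ∧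
  (∀ α : ℝ, 0 ≤ α → ∀ x : X, γ (α • x) = α * γ x) ∧
  (∀ x y : X, γ (x + y) ≤ γ x + γ y)

/-!
An isometry `T` of gauges is Lipschitz for any norm, so by Rademacher's theorem it is
differentiable at some point `x₀`. Positive homogeneity turns the isometry identity into
`γ₂ (t⁻¹ • (T (x₀ + t • v) - T x₀)) = γ₁ v` for `t > 0`, and letting `t → 0⁺` gives
`γ₂ (D v) = γ₁ v` for the derivative `D`, which is therefore an injective, hence bijective, linear
map carrying `K₁` onto `K₂`. Conversely a gauge is determined by its unit ball, so a linear
isomorphism carrying `K₁` onto `K₂` is an isometry.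
-/

open Filter Topology

lemma LipschitzWith.exists_differentiableAt {E F : Type*} [NormedAddCommGroup E]
    [NormedSpace ℝ E] [FiniteDimensional ℝ E] [NormedAddCommGroup F] [NormedSpace ℝ F]
    [FiniteDimensional ℝ F] {K : NNReal} {f : E → F} (hf : LipschitzWith K f) :
    ∃ x, DifferentiableAt ℝ f x :=
  letI : MeasurableSpace E := borel E
  haveI : BorelSpace E := ⟨rfl⟩
  (MeasureTheory.Measure.dense_of_ae
    (hf.ae_differentiableAt (μ := (Module.finBasis ℝ E).addHaar))).nonempty

namespace IsGauge

section Module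

variable {X Y : Type*} [AddCommGroup X] [Module ℝ X] [AddCommGroup Y] [Module ℝ Y]
  {γ γ' : X → ℝ}

lemma nonneg (h : IsGauge γ) (x : X) : 0 ≤ γ x := (h.1 x).1

lemma eq_zero_iff (h : IsGauge γ) {x : X} : γ x = 0 ↔ x = 0 := (h.1 x).2

lemma map_zero (h : IsGauge γ) : γ 0 = 0 := h.eq_zero_iff.mpr rfl

lemma pos (h : IsGauge γ) {x : X} (hx : x ≠ 0) : 0 < γ x :=
  (h.nonneg x).lt_of_ne fun h0 => hx (h.eq_zero_iff.mp h0.symm)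

lemma map_smul_of_nonneg (h : IsGauge γ) {α : ℝ} (hα : 0 ≤ α) (x : X) :
    γ (α • x) = α * γ x := h.2.1 α hα x

lemma map_add_le (h : IsGauge γ) (x y : X) : γ (x + y) ≤ γ x + γ y := h.2.2 x y

lemma comp_linearEquiv (h : IsGauge γ) (e : Y ≃ₗ[ℝ] X) : IsGauge (γ ∘ e) :=
  ⟨fun x => ⟨h.nonneg _, by simp [h.eq_zero_iff]⟩,
    fun α hα x => by simp [h.map_smul_of_nonneg hα],
    fun x y => by simpa using h.map_add_le (e x) (e y)⟩

lemma convexOn (h : IsGauge γ) : ConvexOn ℝ Set.univ γ :=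
  ⟨convex_univ, fun x _ y _ a b ha hb _ => by
    simpa only [h.map_smul_of_nonneg ha, h.map_smul_of_nonneg hb, smul_eq_mul]
      using h.map_add_le (a • x) (b • y)⟩

lemma le_of_forall_le_one_imp (h : IsGauge γ) (h' : IsGauge γ')
    (hK : ∀ x, γ x ≤ 1 → γ' x ≤ 1) (x : X) : γ' x ≤ γ x := by
  rcases eq_or_ne x 0 with rfl | hx
  · rw [h.map_zero, h'.map_zero]
  have ht := h.pos hx
  have hball : γ' ((γ x)⁻¹ • x) ≤ 1 :=
    hK _ (by rw [h.map_smul_of_nonneg (inv_nonneg.mpr ht.le), inv_mul_cancel₀ ht.ne'])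
  rw [h'.map_smul_of_nonneg (inv_nonneg.mpr ht.le), inv_mul_le_iff₀ ht, mul_one] at hball
  exact hball

lemma eq_of_setOf_le_one_eq (h : IsGauge γ) (h' : IsGauge γ')
    (hK : {x | γ x ≤ 1} = {x | γ' x ≤ 1}) : γ = γ' :=
  funext fun x => le_antisymm
    (h'.le_of_forall_le_one_imp h (fun y hy => (hK.symm ▸ hy : y ∈ {x | γ x ≤ 1})) x)
    (h.le_of_forall_le_one_imp h' (fun y hy => (hK ▸ hy : y ∈ {x | γ' x ≤ 1})) x)

lemma image_setOf_le_one_eq_iff {γ₁ : X → ℝ} {γ₂ : Y → ℝ} (h₁ : IsGauge γ₁)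
    (h₂ : IsGauge γ₂) (T : X ≃ₗ[ℝ] Y) :
    T '' {x | γ₁ x ≤ 1} = {y | γ₂ y ≤ 1} ↔ ∀ x, γ₂ (T x) = γ₁ x := by
  rw [T.image_eq_preimage_symm]
  refine ⟨fun hK x => ?_, fun hT => ?_⟩
  · rw [← (h₁.comp_linearEquiv T.symm).eq_of_setOf_le_one_eq h₂ hK]
    simp
  · ext y
    simp [← hT (T.symm y)]

end Module

section Normed

variable {E F : Type*} [NormedAddCommGroup E] [NormedSpace ℝ E]
  [NormedAddCommGroup F] [NormedSpace ℝ F] {γ : E → ℝ}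

lemma eq_norm_mul_inv_norm_smul (h : IsGauge γ) (x : E) : γ x = ‖x‖ * γ (‖x‖⁻¹ • x) := by
  rcases eq_or_ne x 0 with rfl | hx
  · simp [h.map_zero]
  · rw [← h.map_smul_of_nonneg (norm_nonneg x), smul_smul,
      mul_inv_cancel₀ (norm_ne_zero_iff.mpr hx), one_smul]

lemma map_fderiv_eq_of_isometry {δ₁ : E → ℝ} {δ₂ : F → ℝ} (h₁ : IsGauge δ₁) (h₂ : IsGauge δ₂)
    (h₂c : Continuous δ₂) {T : E → F} (hT : ∀ x z, δ₂ (T z - T x) = δ₁ (z - x))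
    {D : E →L[ℝ] F} {x₀ : E} (hD : HasFDerivAt T D x₀) (v : E) : δ₂ (D v) = δ₁ v := by
  have hlim : Tendsto (fun n : ℕ => δ₂ ((n : ℝ) • (T (x₀ + (n : ℝ)⁻¹ • v) - T x₀)))
      atTop (𝓝 (δ₂ (D v))) :=
    (h₂c.tendsto _).comp (hD.lim v (by simpa using tendsto_natCast_atTop_atTop))
  refine tendsto_nhds_unique hlim (tendsto_const_nhds.congr' ?_)
  filter_upwards [eventually_ne_atTop 0] with n hn
  have hn' : (0 : ℝ) < n := Nat.cast_pos.mpr (Nat.pos_of_ne_zero hn)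
  rw [h₂.map_smul_of_nonneg hn'.le, hT, add_sub_cancel_left,
    h₁.map_smul_of_nonneg (inv_nonneg.mpr hn'.le), mul_inv_cancel_left₀ hn'.ne']

variable [FiniteDimensional ℝ E]

lemma continuous (h : IsGauge γ) : Continuous γ :=
  continuousOn_univ.mp (h.convexOn.continuousOn isOpen_univ)

lemma exists_le_mul_norm (h : IsGauge γ) : ∃ C, ∀ x, γ x ≤ C * ‖x‖ := by
  obtain ⟨C, hC⟩ := (isCompact_closedBall (0 : E) 1).exists_bound_of_continuousOn
    h.continuous.continuousOn
  refine ⟨C, fun x => ?_⟩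
  have hu : ‖x‖⁻¹ • x ∈ Metric.closedBall (0 : E) 1 := by
    rw [mem_closedBall_zero_iff, norm_smul, norm_inv, norm_norm]
    exact inv_mul_le_one
  rw [h.eq_norm_mul_inv_norm_smul x, mul_comm C]
  exact mul_le_mul_of_nonneg_left ((Real.le_norm_self _).trans (hC _ hu)) (norm_nonneg x)

lemma exists_pos_mul_norm_le (h : IsGauge γ) : ∃ c > 0, ∀ x, c * ‖x‖ ≤ γ x := by
  cases subsingleton_or_nontrivial E
  · exact ⟨1, one_pos, fun x => by simp [Subsingleton.elim x 0, h.map_zero]⟩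
  obtain ⟨z, hz, hmin⟩ := (isCompact_sphere (0 : E) 1).exists_isMinOn
    (NormedSpace.sphere_nonempty.mpr zero_le_one) h.continuous.continuousOn
  have hz0 : z ≠ 0 := ne_zero_of_mem_unit_sphere ⟨z, hz⟩
  refine ⟨γ z, h.pos hz0, fun x => ?_⟩
  rcases eq_or_ne x 0 with rfl | hx
  · simp [h.map_zero]
  have hu : ‖x‖⁻¹ • x ∈ Metric.sphere (0 : E) 1 := by
    simpa using norm_smul_inv_norm (𝕜 := ℝ) hx
  rw [h.eq_norm_mul_inv_norm_smul x, mul_comm (γ z)]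
  exact mul_le_mul_of_nonneg_left (hmin hu) (norm_nonneg x)

lemma exists_lipschitzWith_of_isometry {δ₁ δ₂ : E → ℝ} (h₁ : IsGauge δ₁) (h₂ : IsGauge δ₂)
    {T : E → E} (hT : ∀ x z, δ₂ (T z - T x) = δ₁ (z - x)) : ∃ K, LipschitzWith K T := by
  obtain ⟨C, hC⟩ := h₁.exists_le_mul_norm
  obtain ⟨c, hc, hc'⟩ := h₂.exists_pos_mul_norm_le
  refine ⟨(C / c).toNNReal, LipschitzWith.of_dist_le' fun x y => ?_⟩
  rw [dist_eq_norm, dist_eq_norm, div_mul_eq_mul_div, le_div_iff₀' hc]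
  calc c * ‖T x - T y‖ ≤ δ₂ (T x - T y) := hc' _
    _ = δ₁ (x - y) := hT y x
    _ ≤ C * ‖x - y‖ := hC _

lemma exists_linearEquiv_of_isometry_of_normed {δ₁ δ₂ : E → ℝ} (h₁ : IsGauge δ₁)
    (h₂ : IsGauge δ₂) {T : E → E} (hT : ∀ x z, δ₂ (T z - T x) = δ₁ (z - x)) :
    ∃ S : E ≃ₗ[ℝ] E, ∀ x, δ₂ (S x) = δ₁ x := by
  obtain ⟨K, hK⟩ := exists_lipschitzWith_of_isometry h₁ h₂ hT
  obtain ⟨x₀, hx₀⟩ := hK.exists_differentiableAt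
  have hD := map_fderiv_eq_of_isometry h₁ h₂ h₂.continuous hT hx₀.hasFDerivAt
  have hinj : Function.Injective (fderiv ℝ T x₀ : E →ₗ[ℝ] E) := by
    refine (injective_iff_map_eq_zero _).mpr fun v hv => h₁.eq_zero_iff.mp ?_
    rw [← hD v]
    exact (congrArg δ₂ hv).trans h₂.map_zero
  exact ⟨LinearEquiv.ofInjectiveEndo _ hinj, hD⟩

end Normed

lemma exists_linearEquiv_of_isometry {X : Type*} [AddCommGroup X] [Module ℝ X]
    [FiniteDimensional ℝ X] {γ₁ γ₂ : X → ℝ} (h₁ : IsGauge γ₁) (h₂ : IsGauge γ₂) {T : X → X}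
    (hT : ∀ x z, γ₂ (T z - T x) = γ₁ (z - x)) :
    ∃ S : X ≃ₗ[ℝ] X, ∀ x, γ₂ (S x) = γ₁ x := by
  let e := (Module.finBasis ℝ X).equivFun
  obtain ⟨S, hS⟩ := exists_linearEquiv_of_isometry_of_normed
    (h₁.comp_linearEquiv e.symm) (h₂.comp_linearEquiv e.symm) (T := e ∘ T ∘ e.symm)
    fun x z => by simpa using hT (e.symm x) (e.symm z)
  exact ⟨e.trans (S.trans e.symm), fun x => by simpa using hS (e x)⟩

end IsGauge

/-- Two gauges are isometric iff their unit balls are linearly equivalent. -/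
theorem stmt_4 {X : Type*} [AddCommGroup X] [Module ℝ X] [FiniteDimensional ℝ X]
    (γ₁ γ₂ : X → ℝ) (hγ₁ : IsGauge γ₁) (hγ₂ : IsGauge γ₂) :
    (∃ T : X → X, ∀ x z : X, γ₂ (T z - T x) = γ₁ (z - x)) ↔
    (∃ T : X ≃ₗ[ℝ] X, T '' {x : X | γ₁ x ≤ 1} = {x : X | γ₂ x ≤ 1}) := by
  constructor
  · rintro ⟨T, hT⟩
    obtain ⟨S, hS⟩ := hγ₁.exists_linearEquiv_of_isometry hγ₂ hT
    exact ⟨S, (hγ₁.image_setOf_le_one_eq_iff hγ₂ S).mpr hS⟩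
  · rintro ⟨T, hT⟩
    have hiso := (hγ₁.image_setOf_le_one_eq_iff hγ₂ T).mp hT
    exact ⟨T, fun x z => by rw [← map_sub, hiso]⟩
end

section
/- For any x, y ∈ X, ω(x, y) ≤ γ_ω(x)·γ(y), where γ_ω is the dual gauge of γ with respect to ω. In a gauge plane, equality holds if and only if y ⊣ x and ω(x, y) ≥ 0. -/
/-- Birkhoff-type orthogonality for a gauge. -/
def Orth {X : Type*} [AddCommGroup X] [Module ℝ X] (γ : X → ℝ) (x y : X) : Prop :=
  ∀ t : ℝ, γ x ≤ γ (x + t • y)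

open Module

/-- smul bound -/
lemma gauge_smul_le {X : Type*} [AddCommGroup X] [Module ℝ X] {γ : X → ℝ}
    (hγ : IsGauge γ) (r : ℝ) (x : X) :
    γ (r • x) ≤ |r| * max (γ x) (γ (-x)) := by
  rcases le_or_gt 0 r with hr | hr
  · rw [hγ.2.1 r hr x, abs_of_nonneg hr]
    exact mul_le_mul_of_nonneg_left (le_max_left _ _) hr
  · have : r • x = (-r) • (-x) := by simp
    rw [this, hγ.2.1 (-r) (by linarith) (-x), abs_of_neg hr]
    exact mul_le_mul_of_nonneg_left (le_max_right _ _) (by linarith)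

/-- positive lower bound on a line missing the origin -/
lemma gauge_line_pos {X : Type*} [AddCommGroup X] [Module ℝ X] {γ : X → ℝ}
    (hγ : IsGauge γ) {x u : X} (hx : x ≠ 0) (h0 : ∀ t : ℝ, u + t • x ≠ 0) :
    ∃ c : ℝ, 0 < c ∧ ∀ t : ℝ, c ≤ γ (u + t • x) := by
  obtain ⟨hpos, hhom, hsub⟩ := hγ
  set φ : ℝ → ℝ := fun t => γ (u + t • x) with hφ
  have hL : (0:ℝ) < max (γ x) (γ (-x)) := by
    have h1 : 0 < γ x := lt_of_le_of_ne (hpos x).1 fun h => hx ((hpos x).2.mp h.symm)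
    exact lt_max_of_lt_left h1
  set L := max (γ x) (γ (-x)) with hLdef
  have hlip : ∀ a b : ℝ, φ a - φ b ≤ |a - b| * L := by
    intro a b
    have h1 : u + a • x = (u + b • x) + (a - b) • x := by
      rw [sub_smul]; abel
    have h2 : γ (u + a • x) ≤ γ (u + b • x) + γ ((a-b) • x) := by
      rw [h1]; exact hsub _ _
    have h3 := gauge_smul_le ⟨hpos, hhom, hsub⟩ (a - b) x
    simp only [hφ]
    linarith
  have hcont : Continuous φ := by
    apply LipschitzWith.continuous (K := Real.toNNReal L)
    apply LipschitzWith.of_dist_le_mul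
    intro a b
    rw [Real.dist_eq, Real.dist_eq, Real.coe_toNNReal L (le_of_lt hL), abs_sub_le_iff]
    constructor
    · calc φ a - φ b ≤ |a - b| * L := hlip a b
        _ = L * |a - b| := mul_comm _ _
    · calc φ b - φ a ≤ |b - a| * L := hlip b a
        _ = L * |a - b| := by rw [abs_sub_comm]; ring
  -- coercivity
  have hmγ : (0:ℝ) < min (γ x) (γ (-x)) := by
    have h1 : 0 < γ x := lt_of_le_of_ne (hpos x).1 fun h => hx ((hpos x).2.mp h.symm)
    have h2 : 0 < γ (-x) := by
      refine lt_of_le_of_ne (hpos (-x)).1 fun h => hx ?_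
      have := (hpos (-x)).2.mp h.symm
      simpa [neg_eq_zero] using this
    exact lt_min h1 h2
  set mγ := min (γ x) (γ (-x)) with hmγdef
  set T : ℝ := (1 + γ (-u)) / mγ with hT
  have hT0 : 0 ≤ T := div_nonneg (by linarith [(hpos (-u)).1]) (le_of_lt hmγ)
  have hfar : ∀ t : ℝ, T ≤ |t| → 1 ≤ φ t := by
    intro t ht
    have hTm : T * mγ = 1 + γ (-u) := div_mul_cancel₀ _ (ne_of_gt hmγ)
    have key : |t| * mγ - γ (-u) ≤ φ t := by
      have h2 : γ (t • x) ≤ φ t + γ (-u) := by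
        have : t • x = (u + t • x) + (-u) := by abel
        rw [this]; exact hsub _ _
      have h3 : |t| * mγ ≤ γ (t • x) := by
        rcases le_or_gt 0 t with h | h
        · rw [hhom t h x, abs_of_nonneg h]
          exact mul_le_mul_of_nonneg_left (min_le_left _ _) h
        · have heq : t • x = (-t) • (-x) := by simp
          rw [heq, hhom (-t) (by linarith) (-x), abs_of_neg h]
          exact mul_le_mul_of_nonneg_left (min_le_right _ _) (by linarith)
      linarith
    have : T * mγ ≤ |t| * mγ := mul_le_mul_of_nonneg_right ht (le_of_lt hmγ)
    linarith [hTm ▸ this]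
  obtain ⟨t₀, ht₀mem, ht₀⟩ := isCompact_Icc.exists_isMinOn (Set.nonempty_Icc.mpr (by linarith : -T ≤ T)) hcont.continuousOn
  have hφt₀ : 0 < φ t₀ :=
    lt_of_le_of_ne (hpos _).1 fun h => h0 t₀ ((hpos _).2.mp h.symm)
  refine ⟨min 1 (φ t₀), lt_min one_pos hφt₀, fun t => ?_⟩
  rcases le_or_gt (|t|) T with h | h
  · have : t ∈ Set.Icc (-T) T := by
      rw [Set.mem_Icc]; constructor <;> [linarith [neg_abs_le t]; linarith [le_abs_self t]]
    exact le_trans (min_le_right _ _) (ht₀ this)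
  · exact le_trans (min_le_left _ _) (hfar t (le_of_lt h))

open Module

/-- basis from x and u with f x = 0, f u ≠ 0 -/
lemma basis_of_fun {X : Type*} [AddCommGroup X] [Module ℝ X] [FiniteDimensional ℝ X]
    (hdim : Module.finrank ℝ X = 2) (f : X →ₗ[ℝ] ℝ) {x u : X} (hx : x ≠ 0)
    (hfx : f x = 0) (hfu : f u ≠ 0) :
    ∃ B : Basis (Fin 2) ℝ X, ⇑B = ![x, u] := by
  have hli : LinearIndependent ℝ ![x, u] := by
    rw [LinearIndependent.pair_iff]
    intro s t hst
    have h1 : f (s • x + t • u) = 0 := by rw [hst]; simp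
    rw [map_add, map_smul, map_smul, hfx, smul_eq_mul, smul_eq_mul, mul_zero, zero_add] at h1
    have ht : t = 0 := by
      rcases mul_eq_zero.mp h1 with h | h
      · exact h
      · exact absurd h hfu
    subst ht
    simp only [zero_smul, add_zero, smul_eq_zero] at hst
    exact ⟨hst.resolve_right hx, rfl⟩
  exact ⟨basisOfLinearIndependentOfCardEqFinrank hli (by simp [hdim]),
    coe_basisOfLinearIndependentOfCardEqFinrank _ _⟩

/-- decomposition z = a • x + s • u with s = f z / f u -/
lemma decomp_of_fun {X : Type*} [AddCommGroup X] [Module ℝ X] [FiniteDimensional ℝ X]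
    (hdim : Module.finrank ℝ X = 2) (f : X →ₗ[ℝ] ℝ) {x u : X} (hx : x ≠ 0)
    (hfx : f x = 0) (hfu : f u ≠ 0) (z : X) :
    ∃ a s : ℝ, z = a • x + s • u ∧ f z = s * f u := by
  obtain ⟨B, hB⟩ := basis_of_fun hdim f hx hfx hfu
  have hz := B.sum_repr z
  rw [Fin.sum_univ_two] at hz
  have hB0 : B 0 = x := by rw [show B 0 = ⇑B 0 from rfl, hB]; rfl
  have hB1 : B 1 = u := by rw [show B 1 = ⇑B 1 from rfl, hB]; rfl
  rw [hB0, hB1] at hz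
  refine ⟨B.repr z 0, B.repr z 1, hz.symm, ?_⟩
  have hfz : f z = f ((B.repr z) 0 • x + (B.repr z) 1 • u) := by rw [hz]
  rw [hfz, map_add, map_smul, map_smul, hfx, smul_eq_mul, smul_eq_mul, mul_zero, zero_add]

/-- kernel of f is the span of x -/
lemma ker_of_fun {X : Type*} [AddCommGroup X] [Module ℝ X] [FiniteDimensional ℝ X]
    (hdim : Module.finrank ℝ X = 2) (f : X →ₗ[ℝ] ℝ) {x u : X} (hx : x ≠ 0)
    (hfx : f x = 0) (hfu : f u ≠ 0) {v : X} (hv : f v = 0) :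
    ∃ t : ℝ, v = t • x := by
  obtain ⟨a, s, hzd, hzf⟩ := decomp_of_fun hdim f hx hfx hfu v
  have hs : s = 0 := by
    rw [hv] at hzf
    rcases mul_eq_zero.mp hzf.symm with h | h
    · exact h
    · exact absurd h hfu
  exact ⟨a, by rw [hzd, hs, zero_smul, add_zero]⟩

/-- boundedness of f on the unit ball of γ -/
lemma bdd_of_fun {X : Type*} [AddCommGroup X] [Module ℝ X] [FiniteDimensional ℝ X]
    (hdim : Module.finrank ℝ X = 2) {γ : X → ℝ} (hγ : IsGauge γ)
    (f : X →ₗ[ℝ] ℝ) {x : X} (hx : x ≠ 0) (hfx : f x = 0) :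
    BddAbove (f '' {z : X | γ z ≤ 1}) := by
  by_cases hu : ∃ u : X, 0 < f u
  · obtain ⟨u, hu⟩ := hu
    have hfu : f u ≠ 0 := ne_of_gt hu
    have h0 : ∀ t : ℝ, u + t • x ≠ 0 := by
      intro t h
      have : f (u + t • x) = 0 := by rw [h]; simp
      rw [map_add, map_smul, hfx, smul_eq_mul, mul_zero, add_zero] at this
      exact hfu this
    obtain ⟨c, hc, hcb⟩ := gauge_line_pos hγ hx h0
    refine ⟨f u / c, ?_⟩
    rintro _ ⟨z, hz, rfl⟩
    obtain ⟨a, s, hzd, hzf⟩ := decomp_of_fun hdim f hx hfx hfu z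
    rcases le_or_gt s 0 with hs | hs
    · rw [hzf]
      have h1 : s * f u ≤ 0 := mul_nonpos_of_nonpos_of_nonneg hs (le_of_lt hu)
      have h2 : 0 ≤ f u / c := le_of_lt (div_pos hu hc)
      linarith
    · have hzeq : z = s • (u + (a/s) • x) := by
        rw [smul_add, smul_smul, mul_div_cancel₀ _ (ne_of_gt hs), hzd]; abel
      have hγz : s * c ≤ γ z := by
        rw [hzeq, hγ.2.1 s (le_of_lt hs)]
        exact mul_le_mul_of_nonneg_left (hcb (a/s)) (le_of_lt hs)
      have hsle : s ≤ 1 / c := by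
        rw [le_div_iff₀ hc]
        exact le_trans hγz hz
      rw [hzf]
      calc s * f u ≤ (1/c) * f u := mul_le_mul_of_nonneg_right hsle (le_of_lt hu)
        _ = f u / c := by ring
  · push_neg at hu
    exact ⟨0, by rintro _ ⟨z, _, rfl⟩; exact hu z⟩

/-- `ω(x,y) ≤ γ_ω(x) γ(y)`; in a gauge plane equality holds iff `y ⊣ x` and
`ω(x,y) ≥ 0`. Here `γ_ω(x) = max {ω(x,z) : γ(z) ≤ 1}` is the dual gauge. -/
theorem stmt_17 {X : Type*} [AddCommGroup X] [Module ℝ X] [FiniteDimensional ℝ X]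
    (hdim : Module.finrank ℝ X = 2)
    (γ : X → ℝ) (hγ : IsGauge γ)
    (ω : X →ₗ[ℝ] X →ₗ[ℝ] ℝ) (hskew : ∀ x y : X, ω x y = -ω y x)
    (hnondeg : ∀ x : X, (∀ y : X, ω x y = 0) → x = 0) :
    (∀ x y : X, ω x y ≤ sSup ((fun z => ω x z) '' {z : X | γ z ≤ 1}) * γ y) ∧
    (∀ x y : X, ω x y = sSup ((fun z => ω x z) '' {z : X | γ z ≤ 1}) * γ y ↔
      (Orth γ y x ∧ 0 ≤ ω x y)) := by
  obtain ⟨hpos, hhom, hsub⟩ := hγ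
  have hγ' : IsGauge γ := ⟨hpos, hhom, hsub⟩
  have γ0 : γ 0 = 0 := by
    have := hhom 0 le_rfl 0
    simpa using this
  set K : Set X := {z : X | γ z ≤ 1} with hK
  have h0K : (0:X) ∈ K := by simp [hK, γ0]
  set m : X → ℝ := fun x => sSup ((fun z => ω x z) '' K) with hm
  have hSne : ∀ x : X, ((fun z => ω x z) '' K).Nonempty := fun x => ⟨ω x 0, 0, h0K, rfl⟩
  have hωxx : ∀ x : X, ω x x = 0 := fun x => by have := hskew x x; linarith
  have hbdd : ∀ x : X, BddAbove ((fun z => ω x z) '' K) := by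
    intro x
    by_cases hx : x = 0
    · refine ⟨0, ?_⟩
      rintro _ ⟨z, _, rfl⟩
      simp [hx]
    · exact bdd_of_fun hdim hγ' (ω x) hx (hωxx x)
  have hle : ∀ x z : X, γ z ≤ 1 → ω x z ≤ m x := fun x z hz =>
    le_csSup (hbdd x) ⟨z, hz, rfl⟩
  have hm0 : ∀ x : X, 0 ≤ m x := by
    intro x
    have := hle x 0 (by rw [γ0]; norm_num)
    simpa using this
  have hnorm : ∀ y : X, 0 < γ y → γ ((γ y)⁻¹ • y) = 1 := by
    intro y hy
    rw [hhom _ (le_of_lt (inv_pos.mpr hy)), inv_mul_cancel₀ (ne_of_gt hy)]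
  have part1 : ∀ x y : X, ω x y ≤ m x * γ y := by
    intro x y
    rcases eq_or_lt_of_le (hpos y).1 with hy | hy
    · have hy0 : y = 0 := (hpos y).2.mp hy.symm
      rw [hy0, map_zero, γ0, mul_zero]
    · have h1 := hle x ((γ y)⁻¹ • y) (le_of_eq (hnorm y hy))
      rw [map_smul, smul_eq_mul] at h1
      calc ω x y = γ y * ((γ y)⁻¹ * ω x y) := by field_simp
        _ ≤ γ y * m x := mul_le_mul_of_nonneg_left h1 (le_of_lt hy)
        _ = m x * γ y := mul_comm _ _
  have hmpos : ∀ x : X, x ≠ 0 → 0 < m x := by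
    intro x hx
    have : ¬ ∀ z : X, ω x z = 0 := fun h => hx (hnondeg x h)
    push_neg at this
    obtain ⟨u, hu⟩ := this
    have hux : ∃ u₀ : X, 0 < ω x u₀ := by
      rcases lt_or_gt_of_ne hu with h | h
      · exact ⟨-u, by rw [map_neg]; linarith⟩
      · exact ⟨u, h⟩
    obtain ⟨u₀, hu₀⟩ := hux
    have hu₀0 : u₀ ≠ 0 := by
      intro h; rw [h, map_zero] at hu₀; exact lt_irrefl 0 hu₀
    have hγu : 0 < γ u₀ :=
      lt_of_le_of_ne (hpos u₀).1 fun h => hu₀0 ((hpos u₀).2.mp h.symm)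
    have h1 := hle x ((γ u₀)⁻¹ • u₀) (le_of_eq (hnorm u₀ hγu))
    rw [map_smul, smul_eq_mul] at h1
    exact lt_of_lt_of_le (mul_pos (inv_pos.mpr hγu) hu₀) h1
  refine ⟨part1, fun x y => ⟨fun hEq => ⟨?_, ?_⟩, fun ⟨hO, hnn⟩ => ?_⟩⟩
  · -- equality → Orth
    intro t
    by_cases hx : x = 0
    · simp [hx]
    · have hmx := hmpos x hx
      have h1 : ω x (y + t • x) = ω x y := by
        rw [map_add, map_smul, hωxx, smul_zero, add_zero]
      have h2 := part1 x (y + t • x)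
      rw [h1, hEq] at h2
      exact le_of_mul_le_mul_left h2 hmx
  · -- equality → nonneg
    rw [hEq]
    exact mul_nonneg (hm0 x) (hpos y).1
  · -- Orth ∧ nonneg → equality
    by_cases hx : x = 0
    · have hm0' : m 0 = 0 := le_antisymm
        (Real.sSup_le (by rintro _ ⟨z, _, rfl⟩; simp) le_rfl) (hm0 0)
      subst hx
      show (ω 0) y = m 0 * γ y
      rw [hm0', zero_mul]
      simp
    · rcases eq_or_lt_of_le (hpos y).1 with hy | hy
      · have hy0 : y = 0 := (hpos y).2.mp hy.symm
        rw [hy0, map_zero, γ0, mul_zero]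
      · -- main case
        have hmx := hmpos x hx
        set a := γ y with ha
        set y' := a⁻¹ • y with hy'
        have hγy' : γ y' = 1 := hnorm y hy
        have hωy' : ω x y' = a⁻¹ * ω x y := by rw [hy', map_smul, smul_eq_mul]
        have hc0 : 0 ≤ ω x y' := by
          rw [hωy']
          exact mul_nonneg (le_of_lt (inv_pos.mpr hy)) hnn
        -- u with ω x u ≠ 0
        have : ¬ ∀ z : X, ω x z = 0 := fun h => hx (hnondeg x h)
        push_neg at this
        obtain ⟨u, hu⟩ := this
        -- ω x y' ≠ 0
        have hcne : ω x y' ≠ 0 := by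
          intro hc
          have hωy0 : ω x y = 0 := by
            rw [hωy'] at hc
            rcases mul_eq_zero.mp hc with h | h
            · exact absurd h (ne_of_gt (inv_pos.mpr hy))
            · exact h
          obtain ⟨t, ht⟩ := ker_of_fun hdim (ω x) hx (hωxx x) hu hωy0
          have := hO (-t)
          rw [ht] at this
          have h2 : t • x + (-t) • x = 0 := by rw [← add_smul]; simp
          rw [h2, γ0] at this
          have h3 : t • x = 0 := (hpos _).2.mp (le_antisymm this (hpos _).1)
          rw [h3] at ht
          have hy2 : 0 < γ y := by rw [← ha]; exact hy
          rw [ht, γ0] at hy2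
          exact lt_irrefl 0 hy2
        have hcpos : 0 < ω x y' := lt_of_le_of_ne hc0 (Ne.symm hcne)
        -- Orth for y'
        have hOy' : ∀ t : ℝ, (1:ℝ) ≤ γ (y' + t • x) := by
          intro t
          have heq : y' + t • x = a⁻¹ • (y + (a * t) • x) := by
            rw [smul_add, smul_smul, ← mul_assoc, inv_mul_cancel₀ (ne_of_gt hy), one_mul, hy']
          rw [heq, hhom _ (le_of_lt (inv_pos.mpr hy))]
          have h1 := hO (a * t)
          calc (1:ℝ) = a⁻¹ * a := (inv_mul_cancel₀ (ne_of_gt hy)).symm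
            _ ≤ a⁻¹ * γ (y + (a*t) • x) :=
              mul_le_mul_of_nonneg_left h1 (le_of_lt (inv_pos.mpr hy))
        -- m x ≤ ω x y'
        have hmle : m x ≤ ω x y' := by
          by_contra hlt
          push_neg at hlt
          obtain ⟨e, ⟨z, hz, rfl⟩, hce⟩ := exists_lt_of_lt_csSup (hSne x) hlt
          have hzpos : 0 < ω x z := lt_of_le_of_lt hcpos.le hce
          set w := (ω x y' / ω x z) • z with hw
          have hωw : ω x w = ω x y' := by
            rw [hw, map_smul, smul_eq_mul, div_mul_cancel₀ _ (ne_of_gt hzpos)]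
          have hker : ω x (w - y') = 0 := by rw [map_sub, hωw, sub_self]
          obtain ⟨t, ht⟩ := ker_of_fun hdim (ω x) hx (hωxx x) hu hker
          have hweq : w = y' + t • x := by
            have := sub_eq_iff_eq_add.mp ht
            rw [this]; abel
          have h1 : (1:ℝ) ≤ γ w := hweq ▸ hOy' t
          have h2 : γ w = (ω x y' / ω x z) * γ z := by
            rw [hw, hhom _ (le_of_lt (div_pos hcpos hzpos))]
          have h3 : γ w ≤ ω x y' / ω x z := by
            rw [h2]
            calc (ω x y' / ω x z) * γ z ≤ (ω x y' / ω x z) * 1 :=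
              mul_le_mul_of_nonneg_left hz (le_of_lt (div_pos hcpos hzpos))
              _ = ω x y' / ω x z := mul_one _
          have h4 : ω x y' / ω x z < 1 := (div_lt_one hzpos).mpr hce
          linarith
        have hfinal : ω x y' = m x :=
          le_antisymm (hle x y' (le_of_eq hγy')) hmle
        have : ω x y = a * ω x y' := by
          rw [hωy', ← mul_assoc, mul_inv_cancel₀ (ne_of_gt hy), one_mul]
        rw [this, hfinal, mul_comm]
end
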